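/- arXiv:1307.1437 — 4 statements merged into one kernel-verified Lean document; each statement's English description precedes it below -/
import Mathlib

section
/- Let σ be a finite Borel measure on the unit sphere S² ⊆ ℝ³ with σ(S²) > 0 that assigns positive measure to every nonempty relatively open subset of S², let ȳ : S² → ℝ^m be continuous, and let α ≥ 0. Set y_a = (1/σ(S²)) ∫_{S²} ȳ(u) dσ(u) and y̆(u) = ȳ(u) + α·y_a. Define C_α = { t·∫_{S²} f(u)·ȳ(u) dσ(u) : t ≥ 0, f = f_d + α/σ(S²) (as a function on S²) where f_d : S² → ℝ is nonnegative, σ-integrable, and ∫_{S²} f_d dσ ≤ 1 }. Then the closure of C_α equals the closure of the conic hull of { y̆(u) : u ∈ S² }. -/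
open MeasureTheory

/-- The unit sphere S² in ℝ³, as a subtype. -/
abbrev Sphere2 : Type := Metric.sphere (0 : EuclideanSpace ℝ (Fin 3)) 1

/-- The conic hull of a set `A`: all finite nonnegative combinations of elements of `A`. -/
def conicHull {m : ℕ} (A : Set (EuclideanSpace ℝ (Fin m))) : Set (EuclideanSpace ℝ (Fin m)) :=
  {y | ∃ (k : ℕ) (c : Fin k → ℝ) (a : Fin k → EuclideanSpace ℝ (Fin m)),
      (∀ i, 0 ≤ c i) ∧ (∀ i, a i ∈ A) ∧ y = ∑ i, c i • a i}

/-- The cone `C_α` of (nonnegative multiples of) images under illuminations consisting of an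
ambient component of strength `α` plus a nonnegative directional component of total mass ≤ 1. -/
def ambientCone {m : ℕ} (σ : Measure Sphere2) (ybar : Sphere2 → EuclideanSpace ℝ (Fin m))
    (α : ℝ) : Set (EuclideanSpace ℝ (Fin m)) :=
  {y | ∃ (t : ℝ) (fd : Sphere2 → ℝ), 0 ≤ t ∧ (∀ u, 0 ≤ fd u) ∧ Integrable fd σ ∧
      (∫ u, fd u ∂σ) ≤ 1 ∧
      y = t • ∫ u, (fd u + α / (σ Set.univ).toReal) • ybar u ∂σ}

/-!
Write `y̆ u = ȳ u + α • y_a`. Adding to `f_d` the constant density `c₀` that makes the ambient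
parts agree writes every point of `C_α` as `t • ∫ g • y̆` with `g ≥ 0`; such an integral is a
nonnegative multiple of an average of points of the cone spanned by the `y̆ u`, so it lies in the
closure of that cone. Conversely, `C_α` is a convex cone, being the cone over the image of the
convex set of admissible densities under an affine map, and `y̆ u₀` is the limit of the points of
`C_α` given by the normalized indicator densities of small balls around `u₀` (which have positive
measure). So the closure of `C_α` is a closed convex cone containing every `y̆ u`.
-/

open Set Filter Topology
open scoped Pointwise

section Cones

variable {𝕜 E : Type*} [Field 𝕜] [LinearOrder 𝕜] [IsStrictOrderedRing 𝕜] [AddCommGroup E]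
  [Module 𝕜 E]

noncomputable def Convex.pointedCone {s : Set E} (hs : Convex 𝕜 s) (hne : s.Nonempty) :
    PointedCone 𝕜 E where
  carrier := {x | ∃ r : 𝕜, 0 ≤ r ∧ x ∈ r • s}
  zero_mem' := let ⟨y, hy⟩ := hne; ⟨0, le_rfl, y, hy, zero_smul 𝕜 y⟩
  add_mem' := by
    rintro x y ⟨r, hr, hx⟩ ⟨q, hq, hy⟩
    exact ⟨r + q, add_nonneg hr hq, hs.add_smul hr hq ▸ add_mem_add hx hy⟩
  smul_mem' := by
    rintro ⟨c, hc⟩ x ⟨r, hr, hx⟩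
    refine ⟨c * r, mul_nonneg hc hr, ?_⟩
    rw [mul_smul]
    exact smul_mem_smul_set hx

theorem Convex.mem_pointedCone {s : Set E} (hs : Convex 𝕜 s) (hne : s.Nonempty) {x : E} :
    x ∈ hs.pointedCone hne ↔ ∃ r : 𝕜, 0 ≤ r ∧ x ∈ r • s := Iff.rfl

end Cones

theorem conicHull_eq_hull {m : ℕ} (A : Set (EuclideanSpace ℝ (Fin m))) :
    conicHull A = PointedCone.hull ℝ A := by
  ext y
  rw [SetLike.mem_coe, Submodule.mem_span_set']
  simp only [conicHull, mem_ofPred_eq]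
  constructor
  · rintro ⟨k, c, a, hc, ha, rfl⟩
    exact ⟨k, fun i => ⟨c i, hc i⟩, fun i => ⟨a i, ha i⟩, rfl⟩
  · rintro ⟨k, c, a, rfl⟩
    exact ⟨k, fun i => c i, fun i => a i, fun i => (c i).2, fun i => (a i).2, rfl⟩

section Integrals

open MeasureTheory

variable {X E : Type*} [MeasurableSpace X] {μ : Measure X} [NormedAddCommGroup E]

theorem Continuous.integrable_of_compactSpace [TopologicalSpace X] [CompactSpace X]
    [OpensMeasurableSpace X] [IsFiniteMeasure μ] {g : X → E} (hg : Continuous g) :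
    Integrable g μ :=
  hg.integrable_of_hasCompactSupport (.of_compactSpace g)

variable [NormedSpace ℝ E]

theorem PointedCone.integral_mem [CompleteSpace E] [IsFiniteMeasure μ] {K : PointedCone ℝ E}
    (hK : IsClosed (K : Set E)) {f : X → E} (hfK : ∀ᵐ x ∂μ, f x ∈ K) (hf : Integrable f μ) :
    ∫ x, f x ∂μ ∈ K := by
  rcases eq_zero_or_neZero μ with rfl | _
  · simp
  · rw [← measure_smul_average]
    exact K.smul_mem measureReal_nonneg (K.convex.average_mem hK hfK hf)

theorem integral_add_const_smul {f : X → ℝ} {g : X → E}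
    (hfg : Integrable (fun x => f x • g x) μ) (hg : Integrable g μ) (c : ℝ) :
    ∫ x, (f x + c) • g x ∂μ = ∫ x, f x • g x ∂μ + c • ∫ x, g x ∂μ := by
  simp_rw [add_smul]
  rw [integral_add hfg (hg.fun_smul c), integral_smul]

theorem MeasureTheory.Integrable.smul_continuous [TopologicalSpace X] [CompactSpace X]
    [OpensMeasurableSpace X] {f : X → ℝ} (hf : Integrable f μ) {g : X → E} (hg : Continuous g) :
    Integrable (fun x => f x • g x) μ := by
  obtain ⟨C, hC⟩ := (isCompact_range hg).isBounded.exists_norm_le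
  exact hf.smul_bdd C hg.aestronglyMeasurable_of_compactSpace (.of_forall fun x => hC _ ⟨x, rfl⟩)

theorem ContinuousAt.tendsto_setAverage_ball [PseudoMetricSpace X] [OpensMeasurableSpace X]
    [CompleteSpace E] [IsFiniteMeasure μ] [μ.IsOpenPosMeasure] {g : X → E} {x₀ : X}
    (hg : ContinuousAt g x₀) (hgi : Integrable g μ) :
    Tendsto (fun r => ⨍ x in Metric.ball x₀ r, g x ∂μ) (𝓝[>] 0) (𝓝 (g x₀)) := by
  refine Metric.tendsto_nhds.mpr fun ε hε => ?_
  obtain ⟨δ, hδ, hgδ⟩ := Metric.continuousAt_iff.mp hg (ε / 2) (half_pos hε)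
  filter_upwards [Ioo_mem_nhdsGT hδ] with r ⟨hr, hrδ⟩
  have hmem : ⨍ x in Metric.ball x₀ r, g x ∂μ ∈ Metric.closedBall (g x₀) (ε / 2) :=
    (convex_closedBall _ _).set_average_mem Metric.isClosed_closedBall
      (Metric.measure_ball_pos μ x₀ hr).ne' (measure_ne_top μ _)
      (ae_restrict_of_forall_mem Metric.isOpen_ball.measurableSet fun x hx =>
        Metric.mem_closedBall.mpr (hgδ (lt_trans (Metric.mem_ball.mp hx) hrδ)).le)
      hgi.integrableOn
  exact (Metric.mem_closedBall.mp hmem).trans_lt (half_lt_self hε)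

end Integrals

section Ambient

open MeasureTheory

variable {m : ℕ} (σ : Measure Sphere2) {ybar : Sphere2 → EuclideanSpace ℝ (Fin m)}

noncomputable def ambientImages (σ : Measure Sphere2) (ybar : Sphere2 → EuclideanSpace ℝ (Fin m))
    (α : ℝ) : Set (EuclideanSpace ℝ (Fin m)) :=
  {z | ∃ fd : Sphere2 → ℝ, (∀ u, 0 ≤ fd u) ∧ Integrable fd σ ∧ ∫ u, fd u ∂σ ≤ 1 ∧
      z = ∫ u, (fd u + α / (σ univ).toReal) • ybar u ∂σ}

theorem mem_ambientCone_iff {α : ℝ} {y : EuclideanSpace ℝ (Fin m)} :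
    y ∈ ambientCone σ ybar α ↔ ∃ t : ℝ, 0 ≤ t ∧ y ∈ t • ambientImages σ ybar α := by
  constructor
  · rintro ⟨t, fd, ht, hfd0, hfd, hfd1, rfl⟩
    exact ⟨t, ht, _, ⟨fd, hfd0, hfd, hfd1, rfl⟩, rfl⟩
  · rintro ⟨t, ht, _, ⟨fd, hfd0, hfd, hfd1, rfl⟩, rfl⟩
    exact ⟨t, fd, ht, hfd0, hfd, hfd1, rfl⟩

variable [IsFiniteMeasure σ]

theorem convex_ambientImages (hy : Continuous ybar) (α : ℝ) :
    Convex ℝ (ambientImages σ ybar α) := by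
  rintro _ ⟨f, hf0, hf, hf1, rfl⟩ _ ⟨g, hg0, hg, hg1, rfl⟩ a b ha hb hab
  refine ⟨fun u => a * f u + b * g u, fun u => by have := hf0 u; have := hg0 u; positivity,
    (hf.const_mul a).add (hg.const_mul b), ?_, ?_⟩
  · rw [integral_add (hf.const_mul a) (hg.const_mul b), integral_const_mul, integral_const_mul]
    nlinarith
  · have hfc : Integrable (fun u => (f u + α / (σ univ).toReal) • ybar u) σ :=
      (hf.add (integrable_const _)).smul_continuous hy
    have hgc : Integrable (fun u => (g u + α / (σ univ).toReal) • ybar u) σ :=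
      (hg.add (integrable_const _)).smul_continuous hy
    rw [← integral_smul, ← integral_smul, ← integral_add (hfc.fun_smul a) (hgc.fun_smul b)]
    refine integral_congr_ae (.of_forall fun u => ?_)
    match_scalars
    linear_combination α / (σ univ).toReal * hab

noncomputable def ambientPointedCone (hy : Continuous ybar) (α : ℝ) :
    PointedCone ℝ (EuclideanSpace ℝ (Fin m)) :=
  (convex_ambientImages σ hy α).pointedCone
    ⟨_, 0, fun _ => le_rfl, integrable_zero _ _ _, by simp, rfl⟩

theorem coe_ambientPointedCone (hy : Continuous ybar) (α : ℝ) :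
    (ambientPointedCone σ hy α : Set (EuclideanSpace ℝ (Fin m))) = ambientCone σ ybar α := by
  ext y
  exact (Convex.mem_pointedCone _ _).trans (mem_ambientCone_iff σ).symm

theorem setAverage_add_mem_ambientCone (hy : Continuous ybar) (α : ℝ) {U : Set Sphere2}
    (hU : MeasurableSet U) (hσU : σ U ≠ 0) :
    (⨍ u in U, ybar u ∂σ) + α • ((σ univ).toReal⁻¹ • ∫ u, ybar u ∂σ) ∈ ambientCone σ ybar α := by
  set fd : Sphere2 → ℝ := U.indicator fun _ => (σ.real U)⁻¹
  have hfd : Integrable fd σ := (integrable_const _).indicator hU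
  have hfd1 : ∫ u, fd u ∂σ = 1 := by
    rw [integral_indicator_const _ hU, smul_eq_mul,
      mul_inv_cancel₀ ((measureReal_ne_zero_iff (measure_ne_top σ U)).mpr hσU)]
  refine ⟨1, fd, zero_le_one, Set.indicator_nonneg fun _ _ => by positivity, hfd, hfd1.le, ?_⟩
  have hfd_smul : (fun u => fd u • ybar u) = U.indicator fun u => (σ.real U)⁻¹ • ybar u :=
    funext fun u => (indicator_smul_apply_left _ _ _ _).symm
  rw [one_smul, integral_add_const_smul (hfd.smul_continuous hy) hy.integrable_of_compactSpace,
    hfd_smul, integral_indicator hU, integral_smul, setAverage_eq, smul_smul, div_eq_mul_inv]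

/-- The shift `c₀` of the density is chosen so that the ambient parts agree:
`c₀ σ(S²) (1 + α) = α (1 - ∫ f_d)`. -/
theorem integral_ambient_eq_integral_smul_shifted (hy : Continuous ybar) {α : ℝ}
    (hα : 1 + α ≠ 0) (hσ0 : (σ univ).toReal ≠ 0) {fd : Sphere2 → ℝ} (hfd : Integrable fd σ) :
    ∫ u, (fd u + α / (σ univ).toReal) • ybar u ∂σ
      = ∫ u, (fd u + α * (1 - ∫ v, fd v ∂σ) / ((1 + α) * (σ univ).toReal)) •
          (ybar u + α • ((σ univ).toReal⁻¹ • ∫ v, ybar v ∂σ)) ∂σ := by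
  have hy_int : Integrable ybar σ := hy.integrable_of_compactSpace
  have hfd_const (c : ℝ) : Integrable (fun u => fd u + c) σ := hfd.add (integrable_const c)
  simp_rw [smul_add]
  rw [integral_add ((hfd_const _).smul_continuous hy) ((hfd_const _).smul_const _),
    integral_smul_const, integral_add hfd (integrable_const _), integral_const,
    integral_add_const_smul (hfd.smul_continuous hy) hy_int,
    integral_add_const_smul (hfd.smul_continuous hy) hy_int, measureReal_def]
  have hden : (1 + α) * (σ univ).toReal ≠ 0 := mul_ne_zero hα hσ0
  match_scalars
  · rfl
  · rw [smul_eq_mul]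
    field_simp
    ring

theorem ambientCone_subset_closure_conicHull [NeZero σ] (hy : Continuous ybar) {α : ℝ}
    (hα : 0 ≤ α) :
    ambientCone σ ybar α ⊆ closure (conicHull (range fun u =>
      ybar u + α • ((σ univ).toReal⁻¹ • ∫ v, ybar v ∂σ))) := by
  rintro _ ⟨t, fd, ht, hfd0, hfd, hfd1, rfl⟩
  rw [integral_ambient_eq_integral_smul_shifted σ hy (by positivity) measureReal_univ_ne_zero hfd,
    conicHull_eq_hull, ← PointedCone.coe_closure]
  refine (PointedCone.closure _).smul_mem ht (PointedCone.integral_mem ?_ ?_ ?_)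
  · rw [PointedCone.coe_closure]
    exact isClosed_closure
  · refine .of_forall fun u => subset_closure ((PointedCone.hull ℝ _).smul_mem ?_
      (PointedCone.subset_hull ⟨u, rfl⟩))
    have := hfd0 u
    have : 0 ≤ 1 - ∫ v, fd v ∂σ := sub_nonneg.mpr hfd1
    positivity
  · exact (hfd.add (integrable_const _)).smul_continuous (hy.add continuous_const)

theorem conicHull_subset_closure_ambientCone [σ.IsOpenPosMeasure] (hy : Continuous ybar)
    (α : ℝ) :
    conicHull (range fun u => ybar u + α • ((σ univ).toReal⁻¹ • ∫ v, ybar v ∂σ))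
      ⊆ closure (ambientCone σ ybar α) := by
  rw [conicHull_eq_hull, ← coe_ambientPointedCone σ hy α, ← PointedCone.coe_closure,
    SetLike.coe_subset_coe, Submodule.span_le]
  rintro _ ⟨u₀, rfl⟩
  rw [SetLike.mem_coe, PointedCone.mem_closure, coe_ambientPointedCone]
  refine mem_closure_of_tendsto ((hy.continuousAt.tendsto_setAverage_ball
    (hy.integrable_of_compactSpace (μ := σ))).add_const _) ?_
  filter_upwards [self_mem_nhdsWithin] with r hr
  exact setAverage_add_mem_ambientCone σ hy α Metric.isOpen_ball.measurableSet
    (Metric.measure_ball_pos σ u₀ hr).ne'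

end Ambient

theorem stmt4_general {m : ℕ} (σ : Measure Sphere2) [IsFiniteMeasure σ]
    (hσ : ∀ U : Set Sphere2, IsOpen U → U.Nonempty → 0 < σ U)
    (ybar : Sphere2 → EuclideanSpace ℝ (Fin m)) (hy : Continuous ybar)
    (α : ℝ) (hα : 0 ≤ α) :
    closure (ambientCone σ ybar α)
      = closure (conicHull (Set.range fun u =>
          ybar u + α • ((σ Set.univ).toReal⁻¹ • ∫ u', ybar u' ∂σ))) := by
  have : Nonempty Sphere2 := (NormedSpace.sphere_nonempty.mpr zero_le_one).to_subtype
  have : σ.IsOpenPosMeasure := ⟨fun U hU hne => (hσ U hU hne).ne'⟩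
  exact (closure_minimal (ambientCone_subset_closure_conicHull σ hy hα) isClosed_closure).antisymm
    (closure_minimal (conicHull_subset_closure_ambientCone σ hy α) isClosed_closure)

theorem stmt4 {m : ℕ} (σ : Measure Sphere2) [IsFiniteMeasure σ]
    (hσpos : 0 < σ Set.univ)
    (hσ : ∀ U : Set Sphere2, IsOpen U → U.Nonempty → 0 < σ U)
    (ybar : Sphere2 → EuclideanSpace ℝ (Fin m)) (hy : Continuous ybar)
    (α : ℝ) (hα : 0 ≤ α) :
    closure (ambientCone σ ybar α)
      = closure (conicHull (Set.range fun u =>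
          ybar u + α • ((σ Set.univ).toReal⁻¹ • ∫ u', ybar u' ∂σ))) :=
  stmt4_general σ hσ ybar hy α hα
end

section
/- Let (O; Δ₁,…,Δ_N; n₁,…,n_N) be a triangulated object in ℝ³ with strictly positive albedo ρ : ∂O → (0,1], let u ∈ S², and let C[u] = (the frontier of S[u] in the subspace topology of ∂O) ∩ Φ. Then for every x ∈ C[u], the quantity t⋆(x,u) = inf{t > 0 : x + t·u ∈ ∂O} is finite (so the shadow retraction x^u = x + t⋆(x,u)·u exists and lies in ∂O), and moreover x^u ∈ E. -/
open MeasureTheory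
open scoped Classical
open scoped RealInnerProductSpace

/-- A point in ℝ³ (Euclidean). -/
abbrev E3 : Type := EuclideanSpace ℝ (Fin 3)

/-- A triangulated object: a compact set `O ⊆ ℝ³` whose topological boundary is the union of
`N` triangles (each the convex hull of three affinely independent points), where two distinct
triangles intersect in the empty set, a common vertex, or a common edge, and each face carries
a unit normal orthogonal to the face. -/
structure TriangulatedObject (N : ℕ) where
  carrier : Set E3
  isCompact : IsCompact carrier
  v : Fin N → Fin 3 → E3
  indep : ∀ i, AffineIndependent ℝ (v i)
  normal : Fin N → E3
  normal_unit : ∀ i, ‖normal i‖ = 1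
  normal_orth : ∀ i k₁ k₂, (inner ℝ (normal i) (v i k₁ - v i k₂) : ℝ) = 0
  boundary_eq : frontier carrier = ⋃ i, convexHull ℝ (Set.range (v i))
  faces_inter : ∀ i j, i ≠ j →
    convexHull ℝ (Set.range (v i)) ∩ convexHull ℝ (Set.range (v j)) = ∅ ∨
    (∃ k₁ k₂, v i k₁ = v j k₂ ∧
      convexHull ℝ (Set.range (v i)) ∩ convexHull ℝ (Set.range (v j)) = {v i k₁}) ∨
    (∃ k₁ k₁' k₂ k₂', k₁ ≠ k₁' ∧ v i k₁ = v j k₂ ∧ v i k₁' = v j k₂' ∧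
      convexHull ℝ (Set.range (v i)) ∩ convexHull ℝ (Set.range (v j))
        = segment ℝ (v i k₁) (v i k₁'))

namespace TriangulatedObject

variable {N : ℕ}

/-- The `i`-th face Δᵢ. -/
def face (T : TriangulatedObject N) (i : Fin N) : Set E3 :=
  convexHull ℝ (Set.range (T.v i))

/-- The set `E` of edge points: union of all edges of all faces. -/
def edges (T : TriangulatedObject N) : Set E3 :=
  ⋃ i, ⋃ k₁, ⋃ k₂, ⋃ (_ : k₁ ≠ k₂), segment ℝ (T.v i k₁) (T.v i k₂)

/-- The boundary ∂O of the object. -/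
def bdry (T : TriangulatedObject N) : Set E3 := frontier T.carrier

/-- The set Φ = ∂O \ E of face-interior points. -/
def Phi (T : TriangulatedObject N) : Set E3 := T.bdry \ T.edges

/-- The outward normal at a boundary point: the normal of (the) face containing `x`
(for `x ∈ Φ` this face is unique); junk value `0` off the faces. -/
noncomputable def normalAt (T : TriangulatedObject N) (x : E3) : E3 :=
  if h : ∃ i, x ∈ T.face i then T.normal h.choose else 0

/-- The point-direction visibility indicator ν(x,u): 1 if the ray from `x` in direction `u`
meets `O` only at `x`, else 0. -/
noncomputable def vis (T : TriangulatedObject N) (x u : E3) : ℝ :=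
  if {p : E3 | ∃ t : ℝ, 0 ≤ t ∧ p = x + t • u} ∩ T.carrier = {x} then 1 else 0

/-- The direct point-illumination irradiance D̄[u](x) = ρ(x)·⟨n(x),u⟩₊·ν(x,u) on Φ, 0 on E. -/
noncomputable def Dbar (T : TriangulatedObject N) (ρ : E3 → ℝ) (u x : E3) : ℝ :=
  if x ∈ T.Phi then ρ x * max (inner ℝ (T.normalAt x) u : ℝ) 0 * T.vis x u else 0

/-- The shadowed region S[u] ⊆ ∂O. -/
def shadow (T : TriangulatedObject N) (ρ : E3 → ℝ) (u : E3) : Set E3 :=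
  {x ∈ T.bdry | T.Dbar ρ u x = 0}

end TriangulatedObject

namespace TriangulatedObject

/-- The relative frontier of `S[u]` within the subspace topology of ∂O, intersected with Φ:
the boundaries of the cast shadows. -/
def castShadowBdry {N : ℕ} (T : TriangulatedObject N) (ρ : E3 → ℝ) (u : E3) : Set E3 :=
  ((closure (T.shadow ρ u) ∩ T.bdry) ∩ (closure (T.bdry \ T.shadow ρ u) ∩ T.bdry)) ∩ T.Phi

end TriangulatedObject

/-!
Near a point `x ∈ C[u]` the boundary `∂O` is a flat piece of a single face `Δᵢ`, on which
`D̄[u] = ρ ⟨nᵢ, u⟩₊ ν`. Lit points near `x` force `⟨nᵢ, u⟩ > 0`; since `∂O` misses the open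
half-ball above `Δᵢ` and a lit ray enters it, that half-ball is disjoint from `O`. The rays of
shadowed points near `x` therefore hit `O` only after a time bounded below, and by compactness
of `O` so does the ray from `x`, which yields a first hit `x + t⋆ • u ∈ ∂O`. If this point lay in
the relative interior of a face `Δⱼ`, the ray would either run inside the plane of `Δⱼ` just
before `t⋆`, or cross `Δⱼ` transversally, and then so would the rays of nearby lit points.
-/

open Set Filter Topology Metric Module

section Convex

variable {ι E : Type*} [Fintype ι]

theorem convexHull_range_eq_image_stdSimplex [AddCommGroup E] [Module ℝ E] (v : ι → E) :
    convexHull ℝ (range v) = Fintype.linearCombination ℝ v '' stdSimplex ℝ ι := by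
  classical
  rw [← convexHull_rangle_single_eq_stdSimplex, LinearMap.image_convexHull, ← range_comp]
  congr 2
  ext i
  simp

theorem exists_mem_segment_of_eq_zero [AddCommGroup E] [Module ℝ E] {v : Fin 3 → E}
    {w : Fin 3 → ℝ} (hw : w ∈ stdSimplex ℝ (Fin 3)) {k : Fin 3} (hk : w k = 0) :
    ∃ i j, i ≠ j ∧ Fintype.linearCombination ℝ v w ∈ segment ℝ (v i) (v j) := by
  obtain ⟨hw₀, hw₁⟩ := hw
  simp only [Fin.sum_univ_three] at hw₁
  fin_cases k <;> simp only [Fin.zero_eta, Fin.mk_one, Fin.reduceFinMk] at hk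
  · exact ⟨1, 2, by decide, w 1, w 2, hw₀ 1, hw₀ 2, by linarith,
      by simp [Fintype.linearCombination_apply, Fin.sum_univ_three, hk]⟩
  · exact ⟨0, 2, by decide, w 0, w 2, hw₀ 0, hw₀ 2, by linarith,
      by simp [Fintype.linearCombination_apply, Fin.sum_univ_three, hk]⟩
  · exact ⟨0, 1, by decide, w 0, w 1, hw₀ 0, hw₀ 1, by linarith,
      by simp [Fintype.linearCombination_apply, Fin.sum_univ_three, hk]⟩

theorem AffineIndependent.eventually_mem_convexHull [NormedAddCommGroup E] [NormedSpace ℝ E]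
    {v : ι → E} (hv : AffineIndependent ℝ v) {w : ι → ℝ} (hw : ∀ i, 0 < w i)
    (hw₁ : ∑ i, w i = 1) :
    ∀ᶠ y in 𝓝 (Fintype.linearCombination ℝ v w),
      y ∈ affineSpan ℝ (range v) → y ∈ convexHull ℝ (range v) := by
  -- `L` is injective by affine independence, so barycentric weights depend continuously on points
  set L := (Fintype.linearCombination ℝ v).prod (Fintype.linearCombination ℝ fun _ ↦ (1 : ℝ))
  have hL : IsClosedEmbedding L := by
    refine LinearMap.isClosedEmbedding_of_injective (LinearMap.ker_eq_bot'.2 fun μ hμ ↦ ?_)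
    simp only [L, LinearMap.prod_apply, Function.prod_apply, Fintype.linearCombination_apply,
      smul_eq_mul, mul_one, Prod.ext_iff, Prod.fst_zero, Prod.snd_zero] at hμ
    exact funext fun i ↦ hv.eq_zero_of_sum_eq_zero hμ.2 hμ.1 i (Finset.mem_univ i)
  have hpos : ∀ᶠ μ in 𝓝 w, ∀ i, 0 < μ i :=
    eventually_all.2 fun i ↦ (continuous_apply i).continuousAt.eventually (lt_mem_nhds (hw i))
  rw [hL.isInducing.nhds_eq_comap, eventually_comap] at hpos
  have hlift : Tendsto (fun y ↦ (y, (1 : ℝ))) (𝓝 (Fintype.linearCombination ℝ v w)) (𝓝 (L w)) := by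
    have : L w = (Fintype.linearCombination ℝ v w, 1) := by
      simp [L, Fintype.linearCombination_apply, hw₁]
    rw [this]
    exact tendsto_id.prodMk_nhds tendsto_const_nhds
  filter_upwards [hlift.eventually hpos] with y hy hyA
  obtain ⟨μ, hμ₁, rfl⟩ := eq_affineCombination_of_mem_affineSpan_of_fintype hyA
  rw [Finset.affineCombination_eq_linear_combination _ _ _ hμ₁] at hy ⊢
  refine mem_convexHull_of_exists_fintype μ v (fun i ↦ (hy μ ?_ i).le) hμ₁ mem_range_self rfl
  simp [L, Fintype.linearCombination_apply, hμ₁]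

end Convex

section InnerProduct

variable {E : Type*} [NormedAddCommGroup E] [InnerProductSpace ℝ E]

theorem vectorSpan_le_orthogonal {s : Set E} {m : E} (h : ∀ x ∈ s, ∀ y ∈ s, ⟪m, x - y⟫ = 0) :
    vectorSpan ℝ s ≤ (ℝ ∙ m)ᗮ := by
  rw [vectorSpan_def, Submodule.span_le]
  rintro _ ⟨x, hx, y, hy, rfl⟩
  exact Submodule.mem_orthogonal_singleton_iff_inner_right.2 (h x hx y hy)

theorem AffineIndependent.vectorSpan_eq_orthogonal [FiniteDimensional ℝ E] (hE : finrank ℝ E = 3)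
    {v : Fin 3 → E} (hv : AffineIndependent ℝ v) {m : E} (hm : m ≠ 0)
    (h : ∀ i j, ⟪m, v i - v j⟫ = 0) : vectorSpan ℝ (range v) = (ℝ ∙ m)ᗮ := by
  refine Submodule.eq_of_le_of_finrank_eq
    (vectorSpan_le_orthogonal (by rintro _ ⟨i, rfl⟩ _ ⟨j, rfl⟩; exact h i j)) ?_
  have := Submodule.finrank_add_finrank_orthogonal (ℝ ∙ m)
  rw [finrank_span_singleton hm, hE] at this
  rw [hv.finrank_vectorSpan (by simp : Fintype.card (Fin 3) = 2 + 1)]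
  omega

end InnerProduct

theorem IsPreconnected.disjoint_of_disjoint_frontier {X : Type*} [TopologicalSpace X]
    {s t : Set X} (hs : IsPreconnected s) (hst : Disjoint s (frontier t)) {x : X} (hxs : x ∈ s)
    (hxt : x ∉ t) : Disjoint s t := by
  have hsub : s ⊆ interior t ∪ (closure t)ᶜ := fun y hy ↦ by
    by_cases hy' : y ∈ closure t
    · rw [closure_eq_interior_union_frontier] at hy'
      exact .inl (hy'.resolve_right (hst.notMem_of_mem_left hy))
    · exact .inr hy'
  rcases hs.subset_or_subset isOpen_interior isClosed_closure.isOpen_compl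
      (disjoint_compl_right.mono_right (compl_subset_compl.2 interior_subset_closure)) hsub
    with h | h
  · exact absurd (interior_subset (h hxs)) hxt
  · exact disjoint_left.2 fun y hy hyt ↦ h hy (subset_closure hyt)

section Geometry

variable {E : Type*} [NormedAddCommGroup E]

theorem disjoint_ball_inter_halfSpace [InnerProductSpace ℝ E] {O : Set E} {x n : E} {r : ℝ}
    (hfr : ∀ w ∈ ball x r, w ∈ frontier O → ⟪n, w - x⟫ = 0) {w₀ : E}
    (hw₀ : w₀ ∈ ball x r ∩ {w | 0 < ⟪n, w - x⟫}) (hw₀O : w₀ ∉ O) :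
    Disjoint (ball x r ∩ {w | 0 < ⟪n, w - x⟫}) O := by
  have hconv : Convex ℝ {w | 0 < ⟪n, w - x⟫} := by
    simp only [inner_sub_right, sub_pos]
    exact convex_halfSpace_gt ⟨inner_add_right n, fun c w ↦ real_inner_smul_right n w c⟩ _
  refine ((convex_ball x r).inter hconv).isPreconnected.disjoint_of_disjoint_frontier ?_ hw₀ hw₀O
  exact disjoint_left.2 fun w ⟨hw, hpos⟩ hfrw ↦ hpos.ne' (hfr w hw hfrw)

variable [NormedSpace ℝ E]

theorem IsCompact.exists_pos_add_smul_mem {O s : Set E} (hO : IsCompact O) {x u : E} (hu : u ≠ 0)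
    {r : ℝ} (hr : 0 < r) (hnear : ∀ y ∈ ball x r ∩ s, ∀ t ∈ Ioo 0 r, y + t • u ∉ O)
    (hhit : ∃ᶠ y in 𝓝 x, y ∈ s ∧ ∃ t : ℝ, 0 < t ∧ y + t • u ∈ O) :
    ∃ t : ℝ, 0 < t ∧ x + t • u ∈ O := by
  by_contra! hmiss
  set R := (fun t : ℝ ↦ x + t • u) '' Ici r
  have hR : IsClosed R :=
    ((Homeomorph.addLeft x).isClosedEmbedding.comp (isClosedEmbedding_smul_left hu)).isClosedMap
      _ isClosed_Ici
  obtain ⟨δ, hδ, hthick⟩ := hO.exists_thickening_subset_open hR.isOpen_compl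
    fun _ hp ⟨t, ht, hpt⟩ ↦ hmiss t (hr.trans_le ht) (by subst hpt; exact hp)
  obtain ⟨y, ⟨hys, t, ht, hyt⟩, hyx⟩ :=
    (hhit.and_eventually (ball_mem_nhds x (lt_min hδ hr))).exists
  rcases lt_or_ge t r with htr | htr
  · exact hnear y ⟨ball_subset_ball (min_le_right _ _) hyx, hys⟩ t ⟨ht, htr⟩ hyt
  · refine hthick (mem_thickening_iff.2 ⟨y + t • u, hyt, ?_⟩) ⟨t, htr, rfl⟩
    rw [dist_add_right, dist_comm]
    exact (mem_ball.1 hyx).trans_le (min_le_left _ _)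

theorem exists_isLeast_add_smul_mem_frontier {O : Set E} (hO : IsClosed O) {x u : E} {r : ℝ}
    (hr : 0 < r) (hnear : ∀ t ∈ Ioo 0 r, x + t • u ∉ O) (hhit : ∃ t : ℝ, 0 < t ∧ x + t • u ∈ O) :
    ∃ τ, IsLeast {t : ℝ | 0 < t ∧ x + t • u ∈ frontier O} τ ∧ ∀ s ∈ Ioo 0 τ, x + s • u ∉ O := by
  have hray : Continuous fun t : ℝ ↦ x + t • u := by fun_prop
  set A := Ici r ∩ (fun t : ℝ ↦ x + t • u) ⁻¹' O
  have hge : ∀ t, 0 < t → x + t • u ∈ O → t ∈ A := fun t ht hmem ↦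
    ⟨not_lt.1 fun htr ↦ hnear t ⟨ht, htr⟩ hmem, hmem⟩
  have hAbdd : BddBelow A := ⟨r, fun _ h ↦ h.1⟩
  obtain ⟨t, ht, hmem⟩ := hhit
  have hτ : sInf A ∈ A := (isClosed_Ici.inter (hO.preimage hray)).csInf_mem ⟨t, hge t ht hmem⟩ hAbdd
  set τ := sInf A
  have hτpos : 0 < τ := hr.trans_le hτ.1
  have hmiss : ∀ s ∈ Ioo 0 τ, x + s • u ∉ O := fun s ⟨hs, hsτ⟩ hmem ↦
    (csInf_le hAbdd (hge s hs hmem)).not_gt hsτ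
  have hfr : x + τ • u ∈ frontier O := by
    rw [frontier_eq_closure_inter_closure, hO.closure_eq]
    refine ⟨hτ.2, mem_closure_of_tendsto
      ((hray.tendsto τ).mono_left (nhdsWithin_le_nhds (s := Iio τ))) ?_⟩
    filter_upwards [Ioo_mem_nhdsLT hτpos] with s hs using hmiss s hs
  refine ⟨τ, ⟨⟨hτpos, hfr⟩, fun s ⟨hs, hsfr⟩ ↦ ?_⟩, hmiss⟩
  exact not_lt.1 fun hsτ ↦ hmiss s ⟨hs, hsτ⟩ (hO.frontier_subset hsfr)

end Geometry

theorem ray_inter_eq_singleton_iff {E : Type*} [AddCommGroup E] [Module ℝ E] {O : Set E}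
    {y u : E} (hy : y ∈ O) (hu : u ≠ 0) :
    {p | ∃ t : ℝ, 0 ≤ t ∧ p = y + t • u} ∩ O = {y} ↔ ∀ t : ℝ, 0 < t → y + t • u ∉ O := by
  constructor
  · intro h t ht hmem
    have : y + t • u ∈ ({y} : Set E) := h ▸ ⟨⟨t, ht.le, rfl⟩, hmem⟩
    simp [ht.ne', hu] at this
  · intro h
    ext p
    simp only [mem_inter_iff, mem_ofPred_eq, mem_singleton_iff]
    constructor
    · rintro ⟨⟨t, ht, rfl⟩, hp⟩
      obtain rfl | ht := ht.eq_or_lt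
      · simp
      · exact absurd hp (h t ht)
    · rintro rfl
      exact ⟨⟨0, le_rfl, by simp⟩, hy⟩

namespace TriangulatedObject

variable {N : ℕ} (T : TriangulatedObject N)

theorem face_subset_bdry (i : Fin N) : T.face i ⊆ T.bdry := by
  rw [bdry, T.boundary_eq]
  exact subset_iUnion (fun i ↦ convexHull ℝ (range (T.v i))) i

theorem exists_mem_face_of_mem_bdry {x : E3} (hx : x ∈ T.bdry) : ∃ i, x ∈ T.face i := by
  rwa [bdry, T.boundary_eq, mem_iUnion] at hx

theorem bdry_subset_carrier : T.bdry ⊆ T.carrier :=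
  T.isCompact.isClosed.frontier_subset

theorem isClosed_face (i : Fin N) : IsClosed (T.face i) :=
  (finite_range _).isClosed_convexHull ℝ

theorem isClosed_edges : IsClosed T.edges :=
  isClosed_iUnion_of_finite fun _ ↦ isClosed_iUnion_of_finite fun _ ↦
    isClosed_iUnion_of_finite fun _ ↦ isClosed_iUnion_of_finite fun _ ↦ by
      rw [← convexHull_pair]
      exact (toFinite _).isClosed_convexHull ℝ

theorem segment_subset_edges (i : Fin N) {k₁ k₂ : Fin 3} (hk : k₁ ≠ k₂) :
    segment ℝ (T.v i k₁) (T.v i k₂) ⊆ T.edges := fun _ hx ↦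
  mem_iUnion.2 ⟨i, mem_iUnion.2 ⟨k₁, mem_iUnion.2 ⟨k₂, mem_iUnion.2 ⟨hk, hx⟩⟩⟩⟩

theorem eq_of_mem_face_of_mem_Phi {x : E3} {i j : Fin N} (hx : x ∈ T.Phi) (hi : x ∈ T.face i)
    (hj : x ∈ T.face j) : i = j := by
  by_contra hne
  have hmem : x ∈ T.face i ∩ T.face j := ⟨hi, hj⟩
  rcases T.faces_inter i j hne with h | ⟨k₁, -, -, h⟩ | ⟨k₁, k₁', -, -, hk, -, -, h⟩
  · exact (h ▸ hmem : x ∈ (∅ : Set E3))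
  · rw [face, face, h, mem_singleton_iff] at hmem
    obtain ⟨k₂, hk⟩ := exists_ne k₁
    exact hx.2 (T.segment_subset_edges i hk.symm (hmem ▸ left_mem_segment ℝ _ _))
  · rw [face, face, h] at hmem
    exact hx.2 (T.segment_subset_edges i hk hmem)

theorem normalAt_eq {x : E3} {i : Fin N} (hx : x ∈ T.Phi) (hi : x ∈ T.face i) :
    T.normalAt x = T.normal i := by
  have h : ∃ j, x ∈ T.face j := ⟨i, hi⟩
  rw [normalAt, dif_pos h, T.eq_of_mem_face_of_mem_Phi hx h.choose_spec hi]

theorem inner_normal_sub_eq_zero {i : Fin N} {y z : E3} (hy : y ∈ T.face i) (hz : z ∈ T.face i) :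
    ⟪T.normal i, y - z⟫ = 0 := by
  have hyz : y - z ∈ vectorSpan ℝ (range (T.v i)) := by
    rw [← direction_affineSpan]
    exact AffineSubspace.vsub_mem_direction (convexHull_subset_affineSpan _ hy)
      (convexHull_subset_affineSpan _ hz)
  have := vectorSpan_le_orthogonal (m := T.normal i)
    (by rintro _ ⟨k₁, rfl⟩ _ ⟨k₂, rfl⟩; exact T.normal_orth i k₁ k₂) hyz
  exact Submodule.mem_orthogonal_singleton_iff_inner_right.1 this

theorem eventually_mem_face_of_inner_eq_zero {p : E3} {j : Fin N} (hp : p ∈ T.face j)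
    (hpE : p ∉ T.edges) : ∀ᶠ y in 𝓝 p, ⟪T.normal j, y - p⟫ = 0 → y ∈ T.face j := by
  obtain ⟨w, hw, rfl⟩ := (convexHull_range_eq_image_stdSimplex (T.v j)).subset hp
  have hpos : ∀ k, 0 < w k := fun k ↦ (hw.1 k).lt_of_ne' fun hk ↦ by
    obtain ⟨k₁, k₂, hk, hseg⟩ := exists_mem_segment_of_eq_zero (v := T.v j) hw hk
    exact hpE (T.segment_subset_edges j hk hseg)
  have hm : T.normal j ≠ 0 := fun h ↦ by simpa [h] using T.normal_unit j
  filter_upwards [(T.indep j).eventually_mem_convexHull hpos hw.2] with y hy hyp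
  refine hy ?_
  have hdir : y -ᵥ Fintype.linearCombination ℝ (T.v j) w ∈
      (affineSpan ℝ (range (T.v j))).direction := by
    rw [direction_affineSpan, (T.indep j).vectorSpan_eq_orthogonal finrank_euclideanSpace_fin hm
      (T.normal_orth j)]
    exact Submodule.mem_orthogonal_singleton_iff_inner_right.2 hyp
  simpa using AffineSubspace.vadd_mem_of_mem_direction hdir (convexHull_subset_affineSpan _ hp)

theorem vis_eq_zero_iff {y u : E3} (hy : y ∈ T.carrier) (hu : u ≠ 0) :
    T.vis y u = 0 ↔ ∃ t : ℝ, 0 < t ∧ y + t • u ∈ T.carrier := by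
  unfold vis
  split_ifs with h
  · simpa using (ray_inter_eq_singleton_iff hy hu).1 h
  · simpa using mt (ray_inter_eq_singleton_iff hy hu).2 h

theorem Dbar_eq_of_mem_face {ρ : E3 → ℝ} {u y : E3} {i : Fin N} (hy : y ∈ T.Phi)
    (hi : y ∈ T.face i) : T.Dbar ρ u y = ρ y * max ⟪T.normal i, u⟫ 0 * T.vis y u := by
  rw [Dbar, if_pos hy, T.normalAt_eq hy hi]

theorem eventually_mem_face_of_mem_Phi {x : E3} {i : Fin N} (hx : x ∈ T.Phi) (hi : x ∈ T.face i) :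
    ∀ᶠ y in 𝓝 x, y ∈ T.bdry → y ∈ T.face i ∧ y ∈ T.Phi := by
  set C := T.edges ∪ ⋃ (j) (_ : j ≠ i), T.face j
  have hC : IsClosed C := T.isClosed_edges.union
    (isClosed_iUnion_of_finite fun j ↦ isClosed_iUnion_of_finite fun _ ↦ T.isClosed_face j)
  have hxC : x ∉ C := by
    simp only [C, mem_union, mem_iUnion, not_or, not_exists]
    exact ⟨hx.2, fun j hj hxj ↦ hj (T.eq_of_mem_face_of_mem_Phi hx hxj hi)⟩
  filter_upwards [hC.isOpen_compl.mem_nhds hxC] with y hyC hy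
  simp only [C, mem_compl_iff, mem_union, mem_iUnion, not_or, not_exists] at hyC
  obtain ⟨j, hj⟩ := T.exists_mem_face_of_mem_bdry hy
  obtain rfl : j = i := by_contra fun hji ↦ hyC.2 j hji hj
  exact ⟨hj, hy, hyC.1⟩

theorem frequently_lit {ρ : E3 → ℝ} {u x : E3} {i : Fin N} (hx : x ∈ T.Phi) (hi : x ∈ T.face i)
    (hu : u ≠ 0) (hlit : x ∈ closure (T.bdry \ T.shadow ρ u)) :
    ∃ᶠ y in 𝓝 x, y ∈ T.face i ∧ 0 < ⟪T.normal i, u⟫ ∧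
      ∀ t : ℝ, 0 < t → y + t • u ∉ T.carrier := by
  refine ((mem_closure_iff_frequently.1 hlit).and_eventually
    (T.eventually_mem_face_of_mem_Phi hx hi)).mono ?_
  rintro y ⟨⟨hyB, hyS⟩, hloc⟩
  obtain ⟨hyi, hyΦ⟩ := hloc hyB
  have hD : T.Dbar ρ u y ≠ 0 := fun h ↦ hyS ⟨hyB, h⟩
  rw [T.Dbar_eq_of_mem_face hyΦ hyi] at hD
  refine ⟨hyi, ?_, ?_⟩
  · by_contra! hc
    exact hD (by rw [max_eq_right hc]; ring)
  · simpa [T.vis_eq_zero_iff (T.bdry_subset_carrier hyB) hu] using right_ne_zero_of_mul hD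

theorem frequently_shadowed {ρ : E3 → ℝ} {u x : E3} {i : Fin N} (hx : x ∈ T.Phi)
    (hi : x ∈ T.face i) (hρ : ∀ y ∈ T.bdry, 0 < ρ y) (hu : u ≠ 0) (hc : 0 < ⟪T.normal i, u⟫)
    (hS : x ∈ closure (T.shadow ρ u)) :
    ∃ᶠ y in 𝓝 x, y ∈ T.face i ∧ ∃ t : ℝ, 0 < t ∧ y + t • u ∈ T.carrier := by
  refine ((mem_closure_iff_frequently.1 hS).and_eventually
    (T.eventually_mem_face_of_mem_Phi hx hi)).mono ?_
  rintro y ⟨⟨hyB, hD⟩, hloc⟩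
  obtain ⟨hyi, hyΦ⟩ := hloc hyB
  rw [T.Dbar_eq_of_mem_face hyΦ hyi, max_eq_left hc.le] at hD
  refine ⟨hyi, (T.vis_eq_zero_iff (T.bdry_subset_carrier hyB) hu).1 ?_⟩
  simpa [(hρ y hyB).ne', hc.ne'] using hD

theorem exists_forall_Ioo_add_smul_notMem {u x : E3} {i : Fin N} (hx : x ∈ T.Phi)
    (hi : x ∈ T.face i) (hu : ‖u‖ = 1) (hc : 0 < ⟪T.normal i, u⟫)
    (hlit : ∃ᶠ y in 𝓝 x, y ∈ T.face i ∧ ∀ t : ℝ, 0 < t → y + t • u ∉ T.carrier) :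
    ∃ r > 0, ∀ y ∈ ball x r ∩ T.face i, ∀ t ∈ Ioo 0 r, y + t • u ∉ T.carrier := by
  obtain ⟨r, hr, hloc⟩ := Metric.eventually_nhds_iff_ball.1 (T.eventually_mem_face_of_mem_Phi hx hi)
  have hray : ∀ y ∈ ball x (r / 2) ∩ T.face i, ∀ t ∈ Ioo 0 (r / 2),
      y + t • u ∈ ball x r ∩ {w | 0 < ⟪T.normal i, w - x⟫} := by
    rintro y ⟨hyx, hyi⟩ t ⟨ht₀, ht⟩
    refine ⟨?_, ?_⟩
    · calc dist (y + t • u) x ≤ dist y x + ‖t • u‖ := by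
            rw [dist_eq_norm, dist_eq_norm, add_sub_right_comm]
            exact norm_add_le _ _
        _ < r / 2 + r / 2 := by
            rw [norm_smul, hu, mul_one, Real.norm_of_nonneg ht₀.le]
            exact add_lt_add (mem_ball.1 hyx) ht
        _ = r := add_halves r
    · rw [mem_ofPred_eq, add_sub_right_comm, inner_add_right, T.inner_normal_sub_eq_zero hyi hi,
        real_inner_smul_right, zero_add]
      exact mul_pos ht₀ hc
  obtain ⟨y, ⟨hyi, hyfree⟩, hyx⟩ := (hlit.and_eventually (ball_mem_nhds x (half_pos hr))).exists
  have hdisj := disjoint_ball_inter_halfSpace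
    (fun w hw hwfr ↦ T.inner_normal_sub_eq_zero (hloc w hw hwfr).1 hi)
    (hray y ⟨hyx, hyi⟩ (r / 4) ⟨by positivity, by linarith⟩) (hyfree _ (by positivity))
  exact ⟨r / 2, half_pos hr, fun y hy t ht ↦ hdisj.notMem_of_mem_left (hray y hy t ht)⟩

theorem mem_edges_of_first_hit {x u : E3} {τ : ℝ} (hτ : 0 < τ) (hp : x + τ • u ∈ T.bdry)
    (hmiss : ∀ s ∈ Ioo 0 τ, x + s • u ∉ T.carrier)
    (hlit : ∃ᶠ y in 𝓝 x, ∀ t : ℝ, 0 < t → y + t • u ∉ T.carrier) : x + τ • u ∈ T.edges := by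
  by_contra hpE
  obtain ⟨j, hj⟩ := T.exists_mem_face_of_mem_bdry hp
  have hface := T.eventually_mem_face_of_inner_eq_zero hj hpE
  have hO : ∀ {w}, w ∈ T.face j → w ∈ T.carrier := fun hw ↦
    T.bdry_subset_carrier (T.face_subset_bdry j hw)
  set m := T.normal j
  by_cases hmu : ⟪m, u⟫ = 0
  · -- the ray runs inside the plane of `Δⱼ` just before reaching it
    have hlim : Tendsto (fun s : ℝ ↦ x + s • u) (𝓝[<] τ) (𝓝 (x + τ • u)) :=
      ((continuous_const.add (continuous_id.smul continuous_const)).tendsto τ).mono_left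
        nhdsWithin_le_nhds
    obtain ⟨s, hs, hsj⟩ := (Eventually.and (Ioo_mem_nhdsLT hτ) (hlim.eventually hface)).exists
    refine hmiss s hs (hO (hsj ?_))
    rw [add_sub_add_left_eq_sub, ← sub_smul, real_inner_smul_right, hmu, mul_zero]
  · -- the rays from nearby lit points cross `Δⱼ` near `x + τ • u`
    set t' : E3 → ℝ := fun y ↦ τ - ⟪m, y - x⟫ / ⟪m, u⟫
    have ht' : Continuous t' := by fun_prop
    have hπ : Tendsto (fun y ↦ y + t' y • u) (𝓝 x) (𝓝 (x + τ • u)) :=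
      (by fun_prop : Continuous fun y ↦ y + t' y • u).tendsto' x _ (by simp [t'])
    have hplane : ∀ y, ⟪m, y + t' y • u - (x + τ • u)⟫ = 0 := fun y ↦ by
      have : y + t' y • u - (x + τ • u) = (y - x) - (⟪m, y - x⟫ / ⟪m, u⟫) • u := by
        simp only [t', sub_smul]
        abel
      rw [this, inner_sub_right, real_inner_smul_right, div_mul_cancel₀ _ hmu, sub_self]
    have hpos : ∀ᶠ y in 𝓝 x, 0 < t' y :=
      ht'.continuousAt.eventually (lt_mem_nhds (by simpa [t'] using hτ))
    obtain ⟨y, ⟨hy, hyj⟩, hypos⟩ :=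
      ((hlit.and_eventually (hπ.eventually hface)).and_eventually hpos).exists
    exact hy _ hypos (hO (hyj (hplane y)))

end TriangulatedObject

theorem stmt8 {N : ℕ} (T : TriangulatedObject N) (ρ : E3 → ℝ)
    (hρ : ∀ x ∈ T.bdry, 0 < ρ x ∧ ρ x ≤ 1)
    (u : E3) (hu : ‖u‖ = 1) :
    ∀ x ∈ T.castShadowBdry ρ u,
      ({t : ℝ | 0 < t ∧ x + t • u ∈ T.bdry}).Nonempty ∧
      x + sInf {t : ℝ | 0 < t ∧ x + t • u ∈ T.bdry} • u ∈ T.edges := by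
  rintro x ⟨⟨⟨hxS, -⟩, hxL, -⟩, hxΦ⟩
  have hu₀ : u ≠ 0 := by rintro rfl; simp at hu
  obtain ⟨i, hi⟩ := T.exists_mem_face_of_mem_bdry hxΦ.1
  have hlit := T.frequently_lit hxΦ hi hu₀ hxL
  obtain ⟨-, -, hc, -⟩ := hlit.exists
  obtain ⟨r, hr, hnear⟩ := T.exists_forall_Ioo_add_smul_notMem hxΦ hi hu hc
    (hlit.mono fun _ hy ↦ ⟨hy.1, hy.2.2⟩)
  have hhit := T.isCompact.exists_pos_add_smul_mem hu₀ hr hnear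
    (T.frequently_shadowed hxΦ hi (fun y hy ↦ (hρ y hy).1) hu₀ hc hxS)
  obtain ⟨τ, hτ, hmiss⟩ := exists_isLeast_add_smul_mem_frontier T.isCompact.isClosed hr
    (hnear x ⟨mem_ball_self hr, hi⟩) hhit
  have hτ' : IsLeast {t : ℝ | 0 < t ∧ x + t • u ∈ T.bdry} τ := hτ
  rw [hτ'.csInf_eq]
  exact ⟨⟨τ, hτ.1⟩, T.mem_edges_of_first_hit hτ.1.1 hτ.1.2 hmiss (hlit.mono fun _ hy ↦ hy.2.2)⟩
end

section
/- Let Ā, L, S ∈ ℝ^{m×n} and μ ∈ ℝ^{n×n} with all entries of μ nonnegative, let γ > 0, and let 0 ≤ γ̄ ≤ (γ/(1+γ))². Suppose the (m+n)×(m+n) block matrix [[I_m, L+S−Ā], [(L+S−Ā)ᵀ, γ̄·ĀᵀĀ − μ]] is symmetric positive semidefinite. Then δ(cone(Ā), cone(L+S)) ≤ γ. -/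
/-!
Taking the Schur complement of the identity block, the hypothesis says that
`γbar • ĀᵀĀ - μ - EᵀE` is positive semidefinite, where `E = L + S - Ā`. On the nonnegative
orthant the `μ` term is nonnegative, so `‖(L + S)x - Āx‖ ≤ t‖Āx‖` with `t = γ / (1 + γ)`.
A relative perturbation of size `t < 1` of the generators moves every unit vector of either cone
to within `t / (1 - t) = γ` of the other cone: a unit `Āx` is within `t` of `(L + S)x`, and a unit
`(L + S)x` satisfies `‖Āx‖ ≤ 1 + ‖(L + S)x - Āx‖`, which bounds the error by `t / (1 - t)`.
-/

open Matrix

/-- Pass from a plain vector in `Fin m → ℝ` to Euclidean space (ℓ² norm). -/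
noncomputable def toEuc {m : ℕ} (y : Fin m → ℝ) : EuclideanSpace ℝ (Fin m) :=
  (EuclideanSpace.equiv (Fin m) ℝ).symm y

/-- The cone generated by the columns of a matrix: {Ax : x ≥ 0}. -/
noncomputable def matCone {m n : ℕ} (A : Matrix (Fin m) (Fin n) ℝ) :
    Set (EuclideanSpace ℝ (Fin m)) :=
  {y | ∃ x : Fin n → ℝ, (∀ j, 0 ≤ x j) ∧ y = toEuc (A.mulVec x)}

/-- The discrepancy δ(C,Ĉ) between two cones (suprema over empty sets are 0). -/
noncomputable def coneDisc {m : ℕ} (C Chat : Set (EuclideanSpace ℝ (Fin m))) : ℝ :=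
  max (⨆ y : {y : EuclideanSpace ℝ (Fin m) // y ∈ C ∧ ‖y‖ = 1},
        Metric.infDist (y : EuclideanSpace ℝ (Fin m)) Chat)
      (⨆ y : {y : EuclideanSpace ℝ (Fin m) // y ∈ Chat ∧ ‖y‖ = 1},
        Metric.infDist (y : EuclideanSpace ℝ (Fin m)) C)

lemma norm_toEuc_sq {m : ℕ} (v : Fin m → ℝ) : ‖toEuc v‖ ^ 2 = v ⬝ᵥ v := by
  rw [toEuc, EuclideanSpace.norm_eq, Real.sq_sqrt (by positivity)]
  simp [dotProduct, sq]

lemma toEuc_sub {m : ℕ} (v w : Fin m → ℝ) : toEuc (v - w) = toEuc v - toEuc w := rfl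

lemma Matrix.posSemidef_sub_transpose_mul_self_of_fromBlocks_one {m n : Type*} [Fintype m]
    [DecidableEq m] [Fintype n] {E : Matrix m n ℝ} {D : Matrix n n ℝ}
    (h : (fromBlocks 1 E Eᵀ D).PosSemidef) : (D - Eᵀ * E).PosSemidef := by
  have : Invertible (1 : Matrix m m ℝ) := invertibleOne
  rw [← conjTranspose_eq_transpose_of_trivial] at h
  simpa [conjTranspose_eq_transpose_of_trivial] using (PosDef.one.fromBlocks₁₁ E D).mp h

lemma Matrix.dotProduct_mulVec_self_le_of_fromBlocks_one {m n : Type*} [Fintype m]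
    [DecidableEq m] [Fintype n] {E : Matrix m n ℝ} {D : Matrix n n ℝ}
    (h : (fromBlocks 1 E Eᵀ D).PosSemidef) (x : n → ℝ) :
    (E *ᵥ x) ⬝ᵥ (E *ᵥ x) ≤ x ⬝ᵥ D *ᵥ x := by
  have hx := (posSemidef_sub_transpose_mul_self_of_fromBlocks_one h).dotProduct_mulVec_nonneg x
  rw [star_trivial, sub_mulVec, dotProduct_sub, ← mulVec_mulVec, dotProduct_mulVec x Eᵀ,
    vecMul_transpose] at hx
  linarith

lemma Matrix.mulVec_nonneg_of_nonneg {m n : Type*} [Fintype n] {M : Matrix m n ℝ}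
    (hM : ∀ i j, 0 ≤ M i j) {x : n → ℝ} (hx : 0 ≤ x) : 0 ≤ M *ᵥ x :=
  fun i => dotProduct_nonneg_of_nonneg (hM i) hx

lemma norm_mulVec_sub_le_of_fromBlocks {m n : ℕ} {A B : Matrix (Fin m) (Fin n) ℝ}
    {μ : Matrix (Fin n) (Fin n) ℝ} (hμ : ∀ i j, 0 ≤ μ i j) {γbar t : ℝ} (ht : 0 ≤ t)
    (hγbar : γbar ≤ t ^ 2)
    (hpsd : (fromBlocks 1 (B - A) (B - A)ᵀ (γbar • (Aᵀ * A) - μ)).PosSemidef)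
    {x : Fin n → ℝ} (hx : 0 ≤ x) :
    ‖toEuc (B *ᵥ x) - toEuc (A *ᵥ x)‖ ≤ t * ‖toEuc (A *ᵥ x)‖ := by
  have hquad := dotProduct_mulVec_self_le_of_fromBlocks_one hpsd x
  have hD : x ⬝ᵥ (γbar • (Aᵀ * A) - μ) *ᵥ x = γbar * (A *ᵥ x ⬝ᵥ A *ᵥ x) - x ⬝ᵥ μ *ᵥ x := by
    rw [sub_mulVec, smul_mulVec, ← mulVec_mulVec, dotProduct_sub, dotProduct_smul,
      dotProduct_mulVec x Aᵀ, vecMul_transpose, smul_eq_mul]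
  rw [hD, sub_mulVec] at hquad
  have hμx : 0 ≤ x ⬝ᵥ μ *ᵥ x := dotProduct_nonneg_of_nonneg hx (mulVec_nonneg_of_nonneg hμ hx)
  have hAx : 0 ≤ A *ᵥ x ⬝ᵥ A *ᵥ x := by rw [← norm_toEuc_sq]; positivity
  rw [← pow_le_pow_iff_left₀ (norm_nonneg _) (by positivity) two_ne_zero, mul_pow, ← toEuc_sub,
    norm_toEuc_sq, norm_toEuc_sq]
  calc (B *ᵥ x - A *ᵥ x) ⬝ᵥ (B *ᵥ x - A *ᵥ x) ≤ γbar * (A *ᵥ x ⬝ᵥ A *ᵥ x) := by linarith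
    _ ≤ t ^ 2 * (A *ᵥ x ⬝ᵥ A *ᵥ x) := mul_le_mul_of_nonneg_right hγbar hAx

lemma iSup_infDist_le {E : Type*} [NormedAddCommGroup E] {C D : Set E} {r : ℝ} (hr : 0 ≤ r)
    (h : ∀ y ∈ C, ‖y‖ = 1 → ∃ z ∈ D, dist y z ≤ r) :
    ⨆ y : {y : E // y ∈ C ∧ ‖y‖ = 1}, Metric.infDist (y : E) D ≤ r :=
  Real.iSup_le (fun ⟨y, hyC, hy⟩ =>
    let ⟨_, hz, hyz⟩ := h y hyC hy
    (Metric.infDist_le_dist_of_mem hz).trans hyz) hr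

lemma coneDisc_le {m : ℕ} {C D : Set (EuclideanSpace ℝ (Fin m))} {r : ℝ} (hr : 0 ≤ r)
    (hCD : ∀ y ∈ C, ‖y‖ = 1 → ∃ z ∈ D, dist y z ≤ r)
    (hDC : ∀ y ∈ D, ‖y‖ = 1 → ∃ z ∈ C, dist y z ≤ r) :
    coneDisc C D ≤ r :=
  max_le (iSup_infDist_le hr hCD) (iSup_infDist_le hr hDC)

lemma coneDisc_matCone_le_of_norm_mulVec_sub_le {m n : ℕ} {A B : Matrix (Fin m) (Fin n) ℝ}
    {t : ℝ} (ht0 : 0 ≤ t) (ht1 : t < 1)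
    (h : ∀ x : Fin n → ℝ, 0 ≤ x → ‖toEuc (B *ᵥ x) - toEuc (A *ᵥ x)‖ ≤ t * ‖toEuc (A *ᵥ x)‖) :
    coneDisc (matCone A) (matCone B) ≤ t / (1 - t) := by
  have h1t : 0 < 1 - t := sub_pos.2 ht1
  have ht_le : t ≤ t / (1 - t) := le_div_self ht0 h1t (by linarith)
  apply coneDisc_le (ht0.trans ht_le)
  · rintro _ ⟨x, hx, rfl⟩ hAx
    refine ⟨_, ⟨x, hx, rfl⟩, ?_⟩
    calc dist (toEuc (A *ᵥ x)) (toEuc (B *ᵥ x)) ≤ t * ‖toEuc (A *ᵥ x)‖ := by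
          rw [dist_comm, dist_eq_norm]; exact h x hx
      _ = t := by rw [hAx, mul_one]
      _ ≤ t / (1 - t) := ht_le
  · rintro _ ⟨x, hx, rfl⟩ hBx
    refine ⟨_, ⟨x, hx, rfl⟩, ?_⟩
    have hA : ‖toEuc (A *ᵥ x)‖ ≤ 1 + ‖toEuc (B *ᵥ x) - toEuc (A *ᵥ x)‖ := by
      rw [← hBx]; exact norm_le_norm_add_norm_sub _ _
    rw [dist_eq_norm, le_div_iff₀ h1t]
    nlinarith [h x hx, mul_le_mul_of_nonneg_left hA ht0]

theorem stmt15_general {m n : ℕ} (Abar L S : Matrix (Fin m) (Fin n) ℝ)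
    (μ : Matrix (Fin n) (Fin n) ℝ) (hμ : ∀ i j, 0 ≤ μ i j)
    (γ γbar : ℝ) (hγ : 0 < γ) (hγbar : γbar ≤ (γ / (1 + γ)) ^ 2)
    (hpsd : (Matrix.fromBlocks (1 : Matrix (Fin m) (Fin m) ℝ) (L + S - Abar)
        (L + S - Abar)ᵀ (γbar • (Abarᵀ * Abar) - μ)).PosSemidef) :
    coneDisc (matCone Abar) (matCone (L + S)) ≤ γ := by
  have h1γ : 0 < 1 + γ := by linarith
  have ht0 : 0 ≤ γ / (1 + γ) := by positivity
  have ht1 : γ / (1 + γ) < 1 := (div_lt_one h1γ).2 (by linarith)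
  calc coneDisc (matCone Abar) (matCone (L + S)) ≤ γ / (1 + γ) / (1 - γ / (1 + γ)) :=
        coneDisc_matCone_le_of_norm_mulVec_sub_le ht0 ht1 fun _ hx =>
          norm_mulVec_sub_le_of_fromBlocks hμ ht0 hγbar hpsd hx
    _ = γ := by field_simp; ring

theorem stmt15 {m n : ℕ} (Abar L S : Matrix (Fin m) (Fin n) ℝ)
    (μ : Matrix (Fin n) (Fin n) ℝ) (hμ : ∀ i j, 0 ≤ μ i j)
    (γ γbar : ℝ) (hγ : 0 < γ) (hγbar0 : 0 ≤ γbar) (hγbar : γbar ≤ (γ / (1 + γ)) ^ 2)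
    (hpsd : (Matrix.fromBlocks (1 : Matrix (Fin m) (Fin m) ℝ) (L + S - Abar)
        (L + S - Abar)ᵀ (γbar • (Abarᵀ * Abar) - μ)).PosSemidef) :
    coneDisc (matCone Abar) (matCone (L + S)) ≤ γ :=
  stmt15_general Abar L S μ hμ γ γbar hγ hγbar hpsd
end

section
/- Let Ā, Â ∈ ℝ^{m×n} with Ā ≠ 0, and let β ≥ 0. Suppose that for every symmetric X ∈ ℝ^{n×n} that is entrywise nonnegative, positive semidefinite, and satisfies ⟨ĀᵀĀ, X⟩ ≤ 1, one has ⟨(Â−Ā)ᵀ(Â−Ā), X⟩ ≤ β. Then there exists μ ∈ ℝ^{n×n} with all entries nonnegative such that the matrix β·ĀᵀĀ − μ − (Â−Ā)ᵀ(Â−Ā) is positive semidefinite; equivalently, the block matrix [[I_m, Â−Ā], [(Â−Ā)ᵀ, β·ĀᵀĀ − μ]] is symmetric positive semidefinite. -/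
open Matrix

/-- The trace inner product ⟨M,N⟩ = trace(Mᵀ N). -/
def matInner {k : ℕ} (M Nn : Matrix (Fin k) (Fin k) ℝ) : ℝ :=
  Matrix.trace (Mᵀ * Nn)

/-!
The hypothesis is homogeneous in `X`, so it says that `M = β ĀᵀĀ - (Â-Ā)ᵀ(Â-Ā)` pairs
nonnegatively with every doubly nonnegative matrix, i.e. `M` lies in the dual of the doubly
nonnegative cone. That dual is the cone `PSD + (entrywise nonnegative)`: it is closed (the PSD part
of a bounded element has bounded diagonal, hence bounded entries), so a matrix outside it is
separated from it by a linear functional, and the symmetrised matrix of that functional is a doubly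
nonnegative matrix pairing negatively with `M`. Writing `M = P + μ` gives `μ`, and the block
matrix is positive semidefinite by its Schur complement with respect to the identity block.
-/

open Set Pointwise

lemma le_mul_of_forall_mul_le_one_imp_le {𝕜 : Type*} [Field 𝕜] [LinearOrder 𝕜]
    [IsStrictOrderedRing 𝕜] {a b β : 𝕜} (hb : 0 ≤ b)
    (h : ∀ t > 0, t * b ≤ 1 → t * a ≤ β) : a ≤ β * b := by
  rcases hb.eq_or_lt with rfl | hb
  · rw [mul_zero]
    by_contra! ha
    have := h ((|β| + 1) / a) (by positivity) (by simp)
    rw [div_mul_cancel₀ _ ha.ne'] at this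
    linarith [le_abs_self β]
  · have := h b⁻¹ (inv_pos.2 hb) (inv_mul_cancel₀ hb.ne').le
    rwa [inv_mul_le_iff₀ hb, mul_comm] at this

namespace Matrix

variable {ι : Type*} [Fintype ι]

instance : LocallyConvexSpace ℝ (Matrix ι ι ℝ) :=
  inferInstanceAs (LocallyConvexSpace ℝ (ι → ι → ℝ))

lemma trace_transpose_mul_eq_sum {m n R : Type*} [Fintype m] [Fintype n] [AddCommMonoid R]
    [Mul R] (A B : Matrix m n R) : (Aᵀ * B).trace = ∑ i, ∑ j, A i j * B i j := by
  simp only [trace, diag, mul_apply, transpose_apply]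
  exact Finset.sum_comm

lemma linearMap_apply_eq_trace_transpose_mul {m n R : Type*} [Fintype m] [Fintype n]
    [DecidableEq m] [DecidableEq n] [CommSemiring R] (f : Matrix m n R →ₗ[R] R)
    (A : Matrix m n R) : f A = (Aᵀ * of fun i j => f (single i j 1)).trace := by
  conv_lhs => rw [matrix_eq_sum_single A]
  simp only [map_sum, trace_transpose_mul_eq_sum, of_apply]
  refine Finset.sum_congr rfl fun i _ => Finset.sum_congr rfl fun j _ => ?_
  rw [← smul_eq_mul, ← map_smul, smul_single, smul_eq_mul, mul_one]

lemma dotProduct_mulVec_eq_trace {R : Type*} [CommSemiring R] (Y : Matrix ι ι R) (z : ι → R) :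
    z ⬝ᵥ (Y *ᵥ z) = ((vecMulVec z z)ᵀ * Y).trace := by
  simp only [trace_transpose_mul_eq_sum, vecMulVec_apply, dotProduct, mulVec, Finset.mul_sum]
  exact Finset.sum_congr rfl fun i _ => Finset.sum_congr rfl fun j _ => by ring

lemma PosSemidef.two_mul_abs_apply_le {P : Matrix ι ι ℝ} (hP : P.PosSemidef) (i j : ι) :
    2 * |P i j| ≤ P i i + P j j := by
  classical
  have hsymm : P j i = P i j := hP.1.apply i j
  have hadd := hP.dotProduct_mulVec_nonneg (Pi.single i 1 + Pi.single j 1)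
  have hsub := hP.dotProduct_mulVec_nonneg (Pi.single i 1 - Pi.single j 1)
  simp [mulVec_add, mulVec_sub, add_dotProduct, sub_dotProduct, mulVec_single] at hadd hsub
  cases abs_cases (P i j) <;> linarith

lemma PosSemidef.trace_transpose_mul_self_mul_nonneg {m n : Type*} [Fintype m] [Fintype n]
    {Y : Matrix n n ℝ} (hY : Y.PosSemidef) (A : Matrix m n ℝ) : 0 ≤ (Aᵀ * A * Y).trace := by
  rw [Matrix.mul_assoc, trace_mul_comm]
  simpa [conjTranspose_eq_transpose_of_trivial] using (hY.mul_mul_conjTranspose_same A).trace_nonneg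

lemma posSemidef_fromBlocks_one_iff {m n : Type*} [Fintype m] [Fintype n] [DecidableEq m]
    (B : Matrix m n ℝ) (D : Matrix n n ℝ) :
    (fromBlocks 1 B Bᵀ D).PosSemidef ↔ (D - Bᵀ * B).PosSemidef := by
  let : Invertible (1 : Matrix m m ℝ) := invertibleOne
  simpa [conjTranspose_eq_transpose_of_trivial] using PosDef.fromBlocks₁₁ B D PosDef.one

lemma isClosed_setOf_posSemidef : IsClosed {P : Matrix ι ι ℝ | P.PosSemidef} := by
  simp only [posSemidef_iff_dotProduct_mulVec, ofPred_and, ofPred_forall]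
  refine .inter (isClosed_eq (by fun_prop) continuous_id) (isClosed_iInter fun x => ?_)
  exact isClosed_le continuous_const (by fun_prop)

lemma isCompact_setOf_posSemidef_diag_le (c : ι → ℝ) :
    IsCompact {P : Matrix ι ι ℝ | P.PosSemidef ∧ ∀ i, P i i ≤ c i} := by
  refine (isCompact_univ_pi fun i => isCompact_univ_pi fun j =>
    isCompact_Icc (a := -(c i + c j)) (b := c i + c j)).of_isClosed_subset ?_ ?_
  · rw [ofPred_and, ofPred_forall]
    exact isClosed_setOf_posSemidef.inter
      (isClosed_iInter fun i => isClosed_le (by fun_prop) continuous_const)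
  · rintro P ⟨hP, hc⟩ i - j -
    have hi : 0 ≤ P i i := hP.diag_nonneg
    have hj : 0 ≤ P j j := hP.diag_nonneg
    exact abs_le.1 (by linarith [hP.two_mul_abs_apply_le i j, hc i, hc j])

/- Near `L`, the PSD part `A - N` of an element `A` has diagonal below `diag L + 1`, so there the set
is contained in (compact set of PSD matrices) + (closed nonnegative orthant), which is closed. -/
lemma isClosed_setOf_exists_nonneg_posSemidef_sub :
    IsClosed {A : Matrix ι ι ℝ | ∃ N : Matrix ι ι ℝ, (∀ i j, 0 ≤ N i j) ∧ (A - N).PosSemidef} := by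
  refine closure_subset_iff_isClosed.1 fun L hL => ?_
  let U := {A : Matrix ι ι ℝ | ∀ i, A i i < L i i + 1}
  let K := {P : Matrix ι ι ℝ | P.PosSemidef ∧ ∀ i, P i i ≤ L i i + 1}
  let NN := {N : Matrix ι ι ℝ | ∀ i j, 0 ≤ N i j}
  have hU : IsOpen U := by
    simp only [U, ofPred_forall]
    exact isOpen_iInter_of_finite fun i => isOpen_lt (by fun_prop) continuous_const
  have hNN : IsClosed NN := by
    simp only [NN, ofPred_forall]
    exact isClosed_iInter fun i => isClosed_iInter fun j =>
      isClosed_le continuous_const (by fun_prop)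
  have hsub : U ∩ {A | ∃ N : Matrix ι ι ℝ, (∀ i j, 0 ≤ N i j) ∧ (A - N).PosSemidef} ⊆ K + NN := by
    rintro A ⟨hA, N, hN, hAN⟩
    refine ⟨A - N, ⟨hAN, fun i => ?_⟩, N, hN, sub_add_cancel A N⟩
    simp only [sub_apply]
    linarith [hA i, hN i i]
  obtain ⟨P, ⟨hP, -⟩, N, hN, rfl⟩ :=
    (hNN.add_left_of_isCompact (isCompact_setOf_posSemidef_diag_le _)).closure_subset_iff.2 hsub
      (hU.inter_closure ⟨fun i => lt_add_one _, hL⟩)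
  exact ⟨N, hN, by simpa using hP⟩

variable (ι) in
def posSemidefAddNonnegCone : ProperCone ℝ (Matrix ι ι ℝ) where
  carrier := {A | ∃ N : Matrix ι ι ℝ, (∀ i j, 0 ≤ N i j) ∧ (A - N).PosSemidef}
  zero_mem' := ⟨0, fun _ _ => le_rfl, by simpa using PosSemidef.zero⟩
  add_mem' := by
    rintro A B ⟨N, hN, hAN⟩ ⟨N', hN', hBN'⟩
    refine ⟨N + N', fun i j => add_nonneg (hN i j) (hN' i j), ?_⟩
    rw [add_sub_add_comm]
    exact hAN.add hBN'
  smul_mem' := by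
    rintro ⟨c, hc⟩ A ⟨N, hN, hAN⟩
    refine ⟨c • N, fun i j => mul_nonneg hc (hN i j), ?_⟩
    change (c • A - c • N).PosSemidef
    rw [← smul_sub]
    exact hAN.smul hc
  isClosed' := isClosed_setOf_exists_nonneg_posSemidef_sub

theorem exists_nonneg_posSemidef_sub_of_isSymm {M : Matrix ι ι ℝ} (hM : M.IsSymm)
    (h : ∀ Y : Matrix ι ι ℝ, (∀ i j, 0 ≤ Y i j) → Y.PosSemidef → 0 ≤ (Mᵀ * Y).trace) :
    ∃ N : Matrix ι ι ℝ, (∀ i j, 0 ≤ N i j) ∧ (M - N).PosSemidef := by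
  classical
  by_contra hMK
  obtain ⟨f, hfK, hfM⟩ := (posSemidefAddNonnegCone ι).hyperplane_separation_point hMK
  set Y : Matrix ι ι ℝ := of fun i j => f (single i j 1)
  have hf : ∀ A, f A = (Aᵀ * Y).trace := linearMap_apply_eq_trace_transpose_mul f.toLinearMap
  have hY : ∀ i j, 0 ≤ Y i j := fun i j =>
    hfK _ ⟨single i j 1, fun _ _ => by rw [single_apply]; positivity, by simpa using PosSemidef.zero⟩
  have hYq : ∀ z, 0 ≤ z ⬝ᵥ (Y *ᵥ z) := fun z => by
    rw [dotProduct_mulVec_eq_trace, ← hf]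
    exact hfK _ ⟨0, fun _ _ => le_rfl, by simpa using posSemidef_vecMulVec_self_star z⟩
  have hYsymm : (Y + Yᵀ).PosSemidef := by
    refine .of_dotProduct_mulVec_nonneg ?_ fun z => ?_
    · rw [isHermitian_iff_isSymm, IsSymm, transpose_add, transpose_transpose, add_comm]
    · rw [star_trivial, add_mulVec, dotProduct_add, dotProduct_mulVec z Yᵀ, vecMul_transpose,
        dotProduct_comm (Y *ᵥ z)]
      exact add_nonneg (hYq z) (hYq z)
  have hMYsymm := h (Y + Yᵀ) (fun i j => add_nonneg (hY i j) (hY j i)) hYsymm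
  rw [mul_add, trace_add, trace_transpose_mul, ← hf] at hMYsymm
  have hMY : (M * Y).trace = f M := by rw [hf, hM.eq]
  linarith

end Matrix

lemma matInner_smul_right {k : ℕ} (M Y : Matrix (Fin k) (Fin k) ℝ) (t : ℝ) :
    matInner M (t • Y) = t * matInner M Y := by
  rw [matInner, Matrix.mul_smul, trace_smul, smul_eq_mul, matInner]

theorem stmt17_general {m n : ℕ} (Abar Ahat : Matrix (Fin m) (Fin n) ℝ)
    (β : ℝ)
    (hX : ∀ X : Matrix (Fin n) (Fin n) ℝ, X.IsSymm → (∀ i j, 0 ≤ X i j) → X.PosSemidef →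
      matInner (Abarᵀ * Abar) X ≤ 1 →
      matInner ((Ahat - Abar)ᵀ * (Ahat - Abar)) X ≤ β) :
    ∃ μ : Matrix (Fin n) (Fin n) ℝ, (∀ i j, 0 ≤ μ i j) ∧
      (β • (Abarᵀ * Abar) - μ - (Ahat - Abar)ᵀ * (Ahat - Abar)).PosSemidef ∧
      (Matrix.fromBlocks (1 : Matrix (Fin m) (Fin m) ℝ) (Ahat - Abar)
        (Ahat - Abar)ᵀ (β • (Abarᵀ * Abar) - μ)).PosSemidef := by
  set B := Abarᵀ * Abar
  set C := (Ahat - Abar)ᵀ * (Ahat - Abar)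
  have hsymm : (β • B - C).IsSymm := by
    simp only [IsSymm, transpose_sub, transpose_smul, transpose_mul, transpose_transpose, B, C]
  have hdual : ∀ Y : Matrix (Fin n) (Fin n) ℝ, (∀ i j, 0 ≤ Y i j) → Y.PosSemidef →
      0 ≤ ((β • B - C)ᵀ * Y).trace := by
    intro Y hYnn hY
    have hscaled : ∀ t > 0, t * matInner B Y ≤ 1 → t * matInner C Y ≤ β := fun t ht hle => by
      simpa only [matInner_smul_right] using
        hX (t • Y) ((isHermitian_iff_isSymm.1 hY.1).smul t) (fun i j => mul_nonneg ht.le (hYnn i j))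
          (hY.smul ht.le) (by rwa [matInner_smul_right])
    have hB : 0 ≤ matInner B Y := by
      simpa [matInner, B, transpose_mul] using hY.trace_transpose_mul_self_mul_nonneg Abar
    have hCB : matInner C Y ≤ β * matInner B Y := le_mul_of_forall_mul_le_one_imp_le hB hscaled
    rw [transpose_sub, transpose_smul, Matrix.sub_mul, Matrix.smul_mul, trace_sub, trace_smul,
      smul_eq_mul]
    exact sub_nonneg.2 hCB
  obtain ⟨μ, hμ, hPSD⟩ := exists_nonneg_posSemidef_sub_of_isSymm hsymm hdual
  rw [sub_right_comm] at hPSD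
  exact ⟨μ, hμ, hPSD, (posSemidef_fromBlocks_one_iff _ _).2 hPSD⟩

theorem stmt17 {m n : ℕ} (Abar Ahat : Matrix (Fin m) (Fin n) ℝ) (hA : Abar ≠ 0)
    (β : ℝ) (hβ : 0 ≤ β)
    (hX : ∀ X : Matrix (Fin n) (Fin n) ℝ, X.IsSymm → (∀ i j, 0 ≤ X i j) → X.PosSemidef →
      matInner (Abarᵀ * Abar) X ≤ 1 →
      matInner ((Ahat - Abar)ᵀ * (Ahat - Abar)) X ≤ β) :
    ∃ μ : Matrix (Fin n) (Fin n) ℝ, (∀ i j, 0 ≤ μ i j) ∧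
      (β • (Abarᵀ * Abar) - μ - (Ahat - Abar)ᵀ * (Ahat - Abar)).PosSemidef ∧
      (Matrix.fromBlocks (1 : Matrix (Fin m) (Fin m) ℝ) (Ahat - Abar)
        (Ahat - Abar)ᵀ (β • (Abarᵀ * Abar) - μ)).PosSemidef :=
  stmt17_general Abar Ahat β hX
end
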